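/- For any f ∈ L¹ of a measure space with a filtration of partitions and any p ∈ (1, ∞), the maximal function Mf = sup_{n∈ℤ} |f|_{|n} satisfies ‖Mf‖_{L^p} ≤ (p/(p-1)) ‖f‖_{L^p}. -/

import Mathlib

open MeasureTheory Filter
open scoped ENNReal Topology

/-- A filtration of partitions of a measure space `Ω`, with regularity constant `N₀`.
`part n` is the partition `ℂ_n`, consisting of countably many disjoint measurable sets
of finite positive measure; `elem n x` is the element `C_n(x)` of `ℂ_n` containing `x`.
The partitions are nested, a parent has measure at most `N₀` times that of a child,
the elements become large as `n → -∞`, and the averages over `C_n(x)` converge a.e.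
to the function as `n → ∞`. -/
structure FiltrationOfPartitions (Ω : Type) [MeasurableSpace Ω] (μ : Measure Ω)
    (N₀ : ℝ) where
  part : ℤ → Set (Set Ω)
  countable : ∀ n, (part n).Countable
  meas : ∀ n, ∀ C ∈ part n, MeasurableSet C
  finite : ∀ n, ∀ C ∈ part n, μ C < ⊤
  pos : ∀ n, ∀ C ∈ part n, 0 < μ C
  disj : ∀ n, (part n).PairwiseDisjoint id
  elem : ℤ → Ω → Set Ω
  elem_mem : ∀ n x, elem n x ∈ part n ∧ x ∈ elem n x
  nested : ∀ n x, elem n x ⊆ elem (n - 1) x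
  reg : ∀ n x, μ (elem (n - 1) x) ≤ ENNReal.ofReal N₀ * μ (elem n x)
  large : ∀ M : ℝ, ∃ m : ℤ, ∀ n : ℤ, n ≤ m → ∀ C ∈ part n, ENNReal.ofReal M ≤ μ C
  conv : ∀ f : Ω → ℝ, Integrable f μ →
    ∀ᵐ x ∂μ, Tendsto (fun n : ℤ => ⨍ y in elem n x, f y ∂μ) atTop (𝓝 (f x))

/-- The maximal function `Mv = sup_n v_{|n}` relative to a filtration of partitions. -/
noncomputable def FiltrationOfPartitions.maximal {Ω : Type} [MeasurableSpace Ω]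
    {μ : Measure Ω} {N₀ : ℝ} (F : FiltrationOfPartitions Ω μ N₀) (v : Ω → ℝ)
    (x : Ω) : ℝ≥0∞ :=
  ⨆ n : ℤ, ENNReal.ofReal (⨍ y in F.elem n x, v y ∂μ)

/-!
Stopping at the first level where the average of `|f|` exceeds `t` (such a level exists and
is bounded below because the cells become large as `n → -∞`) writes `{Mf > t}` as a disjoint
union of cells on each of which `t μ(C) ≤ ∫_C |f|`. Hence Doob's form of the weak-type
estimate, `t μ{Mf > t} ≤ ∫_{Mf > t} |f|`. Multiplying by `p t^{p-2}` and integrating in `t`,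
the layer-cake formula for `μ` on the left and for the measure `|f| μ` on the right give
`∫ (Mf)^p ≤ p/(p-1) ∫ |f| (Mf)^{p-1}`, and Hölder's inequality absorbs the factor
`(∫ (Mf)^p)^{1/q}` into the left-hand side. To know that this factor is finite, `Mf` is first
truncated at a height `K`, which preserves the weak-type estimate, and then `K → ∞`.
-/

section MaximalInequality

variable {Ω : Type*} [MeasurableSpace Ω]

def SatisfiesMaximalIneq (μ : Measure Ω) (M G : Ω → ℝ≥0∞) : Prop :=
  ∀ t : ℝ, 0 < t → ENNReal.ofReal t * μ {x | ENNReal.ofReal t < M x} ≤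
    ∫⁻ x in {x | ENNReal.ofReal t < M x}, G x ∂μ

variable {μ : Measure Ω}

theorem SatisfiesMaximalIneq.min_const {M G : Ω → ℝ≥0∞} (h : SatisfiesMaximalIneq μ M G)
    (K : ℝ≥0∞) : SatisfiesMaximalIneq μ (fun x => min (M x) K) G := by
  intro t ht
  by_cases htK : ENNReal.ofReal t < K
  · have hlevel : {x | ENNReal.ofReal t < min (M x) K} = {x | ENNReal.ofReal t < M x} := by
      ext x
      simp [htK]
    rw [hlevel]
    exact h t ht
  · have hempty : {x | ENNReal.ofReal t < min (M x) K} = ∅ :=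
      Set.eq_empty_of_forall_notMem fun x hx => htK (hx.trans_le (min_le_right _ _))
    rw [hempty, measure_empty, mul_zero]
    exact zero_le

theorem SatisfiesMaximalIneq.lintegral_rpow_le {M G : Ω → ℝ≥0∞}
    (h : SatisfiesMaximalIneq μ M G) (hM : Measurable M) (hM_top : ∀ x, M x ≠ ∞)
    (hG : AEMeasurable G μ) {p : ℝ} (hp : 1 < p) :
    ∫⁻ x, M x ^ p ∂μ ≤
      ENNReal.ofReal (p / (p - 1)) * ∫⁻ x, G x * M x ^ (p - 1) ∂μ := by
  have hp₀ : 0 < p := by linarith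
  have hp₁ : 0 < p - 1 := by linarith
  set m : Ω → ℝ := fun x => (M x).toReal
  have hm : Measurable m := hM.ennreal_toReal
  have hm_rpow : ∀ q : ℝ, 0 ≤ q → ∀ x, ENNReal.ofReal (m x ^ q) = M x ^ q := fun q hq x => by
    rw [← ENNReal.ofReal_rpow_of_nonneg ENNReal.toReal_nonneg hq,
      ENNReal.ofReal_toReal (hM_top x)]
  -- `∫_{M > t} G dμ = ν {M > t}`, so a layer-cake formula for `ν` undoes the one for `μ`.
  set ν := μ.withDensity G
  have hν : ∀ t : ℝ, 0 < t → ENNReal.ofReal t * μ {x | t < m x} ≤ ν {x | t < m x} := by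
    intro t ht
    have hlevel : {x | t < m x} = {x | ENNReal.ofReal t < M x} := by
      ext x
      exact (ENNReal.ofReal_lt_iff_lt_toReal ht.le (hM_top x)).symm
    rw [withDensity_apply _ (measurableSet_lt measurable_const hm), hlevel]
    exact h t ht
  calc ∫⁻ x, M x ^ p ∂μ = ∫⁻ x, ENNReal.ofReal (m x ^ p) ∂μ := by
        simp only [hm_rpow p hp₀.le]
    _ = ENNReal.ofReal p * ∫⁻ t in Set.Ioi 0, μ {x | t < m x} * ENNReal.ofReal (t ^ (p - 1)) :=
      lintegral_rpow_eq_lintegral_meas_lt_mul μ (ae_of_all _ fun _ => ENNReal.toReal_nonneg)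
        hm.aemeasurable hp₀
    _ ≤ ENNReal.ofReal p *
          ∫⁻ t in Set.Ioi 0, ν {x | t < m x} * ENNReal.ofReal (t ^ (p - 1 - 1)) := by
      gcongr ENNReal.ofReal p * ?_
      refine setLIntegral_mono' measurableSet_Ioi fun t (ht : 0 < t) => ?_
      calc μ {x | t < m x} * ENNReal.ofReal (t ^ (p - 1))
          = ENNReal.ofReal t * μ {x | t < m x} * ENNReal.ofReal (t ^ (p - 1 - 1)) := by
            rw [mul_comm (ENNReal.ofReal t), mul_assoc, ← ENNReal.ofReal_mul ht.le,
              ← Real.rpow_one_add' ht.le (by linarith)]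
            ring_nf
        _ ≤ _ := by gcongr; exact hν t ht
    _ = ENNReal.ofReal (p / (p - 1)) * (ENNReal.ofReal (p - 1) *
          ∫⁻ t in Set.Ioi 0, ν {x | t < m x} * ENNReal.ofReal (t ^ (p - 1 - 1))) := by
      rw [← mul_assoc, ← ENNReal.ofReal_mul (by positivity), div_mul_cancel₀ _ hp₁.ne']
    _ = ENNReal.ofReal (p / (p - 1)) * ∫⁻ x, G x * M x ^ (p - 1) ∂μ := by
      rw [← lintegral_rpow_eq_lintegral_meas_lt_mul ν
        (ae_of_all _ fun _ => ENNReal.toReal_nonneg) hm.aemeasurable hp₁,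
        lintegral_congr (hm_rpow _ hp₁.le),
        lintegral_withDensity_eq_lintegral_mul₀ hG (hM.pow_const _).aemeasurable]
      rfl

theorem rpow_lintegral_rpow_le_of_le_mul_lintegral_mul_rpow_sub_one {M G : Ω → ℝ≥0∞}
    (hM : AEMeasurable M μ) (hG : AEMeasurable G μ) {p : ℝ} (hp : 1 < p) {c : ℝ≥0∞}
    (hfin : ∫⁻ x, M x ^ p ∂μ ≠ ∞)
    (h : ∫⁻ x, M x ^ p ∂μ ≤ c * ∫⁻ x, G x * M x ^ (p - 1) ∂μ) :
    (∫⁻ x, M x ^ p ∂μ) ^ (1 / p) ≤ c * (∫⁻ x, G x ^ p ∂μ) ^ (1 / p) := by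
  have hq : p.HolderConjugate (p / (p - 1)) := Real.HolderConjugate.conjExponent hp
  set J := ∫⁻ x, M x ^ p ∂μ
  set q := p / (p - 1)
  have hHolder :
      ∫⁻ x, G x * M x ^ (p - 1) ∂μ ≤ (∫⁻ x, G x ^ p ∂μ) ^ (1 / p) * J ^ (1 / q) := by
    have hMq : ∀ x, (M x ^ (p - 1)) ^ q = M x ^ p := fun x => by
      rw [← ENNReal.rpow_mul, hq.sub_one_mul_conj]
    simpa only [hMq, Pi.mul_apply] using
      ENNReal.lintegral_mul_le_Lp_mul_Lq μ hq hG (hM.pow_const (p - 1))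
  rcases eq_or_ne J 0 with hJ | hJ
  · rw [hJ, ENNReal.zero_rpow_of_pos (by simpa using hq.pos)]
    exact zero_le
  have hJq_ne_zero : J ^ (1 / q) ≠ 0 := by simp [J, hJ, hfin]
  have hJq_ne_top : J ^ (1 / q) ≠ ∞ :=
    ENNReal.rpow_ne_top_of_nonneg (by simpa using hq.symm.nonneg) hfin
  refine (ENNReal.mul_le_mul_iff_left hJq_ne_zero hJq_ne_top).1 ?_
  calc J ^ (1 / p) * J ^ (1 / q) = J := by
        rw [← ENNReal.rpow_add _ _ hJ hfin, one_div, one_div, hq.inv_add_inv_eq_one,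
          ENNReal.rpow_one]
    _ ≤ c * ((∫⁻ x, G x ^ p ∂μ) ^ (1 / p) * J ^ (1 / q)) := h.trans (by gcongr)
    _ = c * (∫⁻ x, G x ^ p ∂μ) ^ (1 / p) * J ^ (1 / q) := (mul_assoc _ _ _).symm

theorem lintegral_rpow_eq_iSup_lintegral_min_rpow {M : Ω → ℝ≥0∞} (hM : Measurable M) {p : ℝ}
    (hp : 0 < p) :
    ∫⁻ x, M x ^ p ∂μ = ⨆ K : ℕ, ∫⁻ x, min (M x) K ^ p ∂μ := by
  have hmono : Monotone fun (K : ℕ) x => min (M x) K ^ p := fun K L hKL x =>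
    ENNReal.rpow_le_rpow (min_le_min_left _ (Nat.cast_le.2 hKL)) hp.le
  rw [← lintegral_iSup (fun K => (hM.min measurable_const).pow_const p) hmono]
  refine lintegral_congr fun x => ?_
  have hsup : M x = ⨆ K : ℕ, min (M x) K := by
    rw [← inf_iSup_eq, ENNReal.iSup_natCast, inf_top_eq]
  conv_lhs => rw [hsup]
  exact (ENNReal.orderIsoRpow p hp).map_iSup _

theorem SatisfiesMaximalIneq.rpow_lintegral_rpow_le {M G : Ω → ℝ≥0∞}
    (h : SatisfiesMaximalIneq μ M G) (hM : Measurable M) (hG : AEMeasurable G μ)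
    (hG_int : ∫⁻ x, G x ∂μ ≠ ∞) {p : ℝ} (hp : 1 < p) :
    (∫⁻ x, M x ^ p ∂μ) ^ (1 / p) ≤
      ENNReal.ofReal (p / (p - 1)) * (∫⁻ x, G x ^ p ∂μ) ^ (1 / p) := by
  set c := ENNReal.ofReal (p / (p - 1))
  have htrunc : ∀ K : ℕ,
      (∫⁻ x, min (M x) K ^ p ∂μ) ^ (1 / p) ≤ c * (∫⁻ x, G x ^ p ∂μ) ^ (1 / p) := by
    intro K
    have hMK : Measurable fun x => min (M x) K := hM.min measurable_const
    have hle := (h.min_const K).lintegral_rpow_le hMK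
      (fun x => ((min_le_right _ _).trans_lt (ENNReal.natCast_lt_top K)).ne) hG hp
    have hfin : ∫⁻ x, min (M x) K ^ p ∂μ ≠ ∞ := by
      refine (hle.trans_lt ?_).ne
      calc c * ∫⁻ x, G x * min (M x) K ^ (p - 1) ∂μ
          ≤ c * ∫⁻ x, G x * (K : ℝ≥0∞) ^ (p - 1) ∂μ := by
            gcongr with x
            exact min_le_right _ _
        _ = c * ((∫⁻ x, G x ∂μ) * (K : ℝ≥0∞) ^ (p - 1)) := by
            rw [lintegral_mul_const'' _ hG]
        _ < ∞ := ENNReal.mul_lt_top ENNReal.ofReal_lt_top (ENNReal.mul_lt_top hG_int.lt_top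
            (ENNReal.rpow_lt_top_of_nonneg (by linarith) (ENNReal.natCast_ne_top K)))
    exact rpow_lintegral_rpow_le_of_le_mul_lintegral_mul_rpow_sub_one hMK.aemeasurable hG hp
      hfin hle
  rw [lintegral_rpow_eq_iSup_lintegral_min_rpow hM (by linarith),
    ← ENNReal.orderIsoRpow_apply (1 / p) (by positivity), OrderIso.map_iSup]
  exact iSup_le htrunc

theorem mul_measure_sUnion_le_setLIntegral {𝒞 : Set (Set Ω)} (h𝒞 : 𝒞.Countable)
    (hdisj : 𝒞.PairwiseDisjoint id)
    (hmeas : ∀ C ∈ 𝒞, MeasurableSet C) {c : ℝ≥0∞} {G : Ω → ℝ≥0∞}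
    (hC : ∀ C ∈ 𝒞, c * μ C ≤ ∫⁻ x in C, G x ∂μ) :
    c * μ (⋃₀ 𝒞) ≤ ∫⁻ x in ⋃₀ 𝒞, G x ∂μ := by
  rw [measure_sUnion h𝒞 hdisj hmeas, ENNReal.tsum_mul_left.symm, Set.sUnion_eq_biUnion,
    lintegral_biUnion h𝒞 hmeas hdisj]
  exact ENNReal.tsum_le_tsum fun C => hC C C.2

theorem ofReal_mul_measure_le_setLIntegral_of_lt_setAverage {C : Set Ω} (hC₀ : μ C ≠ 0)
    (hC : μ C ≠ ∞) {g : Ω → ℝ} (hg : IntegrableOn g C μ) (hg₀ : 0 ≤ g) {l : ℝ} (hl : 0 ≤ l)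
    (hlt : l < ⨍ x in C, g x ∂μ) :
    ENNReal.ofReal l * μ C ≤ ∫⁻ x in C, ENNReal.ofReal (g x) ∂μ := by
  have hCpos : 0 < μ.real C := ENNReal.toReal_pos hC₀ hC
  rw [setAverage_eq, smul_eq_mul, inv_mul_eq_div, lt_div_iff₀ hCpos] at hlt
  rw [← ofReal_integral_eq_lintegral_ofReal hg (ae_of_all _ hg₀), ← ENNReal.ofReal_toReal hC,
    ← ENNReal.ofReal_mul hl]
  exact ENNReal.ofReal_le_ofReal hlt.le

end MaximalInequality

namespace FiltrationOfPartitions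

variable {Ω : Type} [MeasurableSpace Ω] {μ : Measure Ω} {N₀ : ℝ}
variable (F : FiltrationOfPartitions Ω μ N₀)

theorem elem_eq_of_mem {n : ℤ} {C : Set Ω} (hC : C ∈ F.part n) {x : Ω} (hx : x ∈ C) :
    F.elem n x = C := by
  by_contra h
  exact Set.disjoint_left.1 (F.disj n (F.elem_mem n x).1 hC h) (F.elem_mem n x).2 hx

theorem elem_subset_elem {m n : ℤ} (h : m ≤ n) (x : Ω) : F.elem n x ⊆ F.elem m x :=
  antitone_int_of_succ_le (f := fun n => F.elem n x) (fun n => by simpa using F.nested (n + 1) x) h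

theorem elem_eq_elem_of_mem {k n : ℤ} (hkn : k ≤ n) {x y : Ω} (hy : y ∈ F.elem n x) :
    F.elem k y = F.elem k x :=
  F.elem_eq_of_mem (F.elem_mem k x).1 (F.elem_subset_elem hkn x hy)

theorem measurable_comp_elem (n : ℤ) (φ : Set Ω → ℝ≥0∞) :
    Measurable fun x => φ (F.elem n x) := by
  intro s _
  have h : (fun x => φ (F.elem n x)) ⁻¹' s = ⋃₀ {C | C ∈ F.part n ∧ φ C ∈ s} := by
    ext x
    constructor
    · intro hx
      exact ⟨F.elem n x, ⟨(F.elem_mem n x).1, hx⟩, (F.elem_mem n x).2⟩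
    · rintro ⟨C, ⟨hC, hφ⟩, hx⟩
      rwa [Set.mem_preimage, F.elem_eq_of_mem hC hx]
  rw [h]
  exact MeasurableSet.sUnion ((F.countable n).mono fun C hC => hC.1) fun C hC => F.meas n C hC.1

theorem measurable_maximal (g : Ω → ℝ) : Measurable (F.maximal g) :=
  .iSup fun n => F.measurable_comp_elem n fun C => ENNReal.ofReal (⨍ y in C, g y ∂μ)

theorem lt_maximal_iff (g : Ω → ℝ) {l : ℝ} (hl : 0 ≤ l) (x : Ω) :
    ENNReal.ofReal l < F.maximal g x ↔ ∃ n, l < ⨍ y in F.elem n x, g y ∂μ := by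
  simp only [maximal, lt_iSup_iff, ENNReal.ofReal_lt_ofReal_iff_of_nonneg hl]

theorem exists_setAverage_elem_lt {g : Ω → ℝ} (hg : Integrable g μ) (hg₀ : 0 ≤ g) {l : ℝ}
    (hl : 0 < l) : ∃ m : ℤ, ∀ n ≤ m, ∀ x, ⨍ y in F.elem n x, g y ∂μ < l := by
  set I := ∫ y, g y ∂μ
  obtain ⟨m, hm⟩ := F.large ((I + 1) / l)
  refine ⟨m, fun n hn x => ?_⟩
  have hC := (F.elem_mem n x).1
  have hlarge : (I + 1) / l ≤ μ.real (F.elem n x) :=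
    (ENNReal.ofReal_le_iff_le_toReal (F.finite n _ hC).ne).1 (hm n hn _ hC)
  have hI : ∫ y in F.elem n x, g y ∂μ ≤ I := setIntegral_le_integral hg (ae_of_all _ hg₀)
  have hI₀ : 0 ≤ I := integral_nonneg hg₀
  have hCpos : 0 < μ.real (F.elem n x) := lt_of_lt_of_le (by positivity) hlarge
  rw [setAverage_eq, smul_eq_mul, inv_mul_eq_div, div_lt_iff₀ hCpos]
  rw [div_le_iff₀ hl] at hlarge
  linarith

def stoppingCells (g : Ω → ℝ) (l : ℝ) : Set (Set Ω) :=
  {C | ∃ n x, C = F.elem n x ∧ l < ⨍ y in F.elem n x, g y ∂μ ∧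
    ∀ k < n, ⨍ y in F.elem k x, g y ∂μ ≤ l}

theorem elem_eq_of_stopping {g : Ω → ℝ} {l : ℝ} {n n' : ℤ} (hnn' : n ≤ n') {x x' z : Ω}
    (hx : l < ⨍ y in F.elem n x, g y ∂μ) (hx' : ∀ k < n', ⨍ y in F.elem k x', g y ∂μ ≤ l)
    (hz : z ∈ F.elem n x) (hz' : z ∈ F.elem n' x') :
    F.elem n x = F.elem n' x' := by
  have hcell : F.elem n x' = F.elem n x := by
    rw [← F.elem_eq_elem_of_mem hnn' hz', F.elem_eq_elem_of_mem le_rfl hz]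
  obtain rfl : n = n' := by
    refine hnn'.antisymm (not_lt.1 fun hlt => ?_)
    have := hx' n hlt
    rw [hcell] at this
    linarith
  rw [← F.elem_eq_elem_of_mem le_rfl hz, F.elem_eq_elem_of_mem le_rfl hz']

theorem stoppingCells_pairwiseDisjoint (g : Ω → ℝ) (l : ℝ) :
    (F.stoppingCells g l).PairwiseDisjoint id := by
  rintro _ ⟨n, x, rfl, hx, hx'⟩ _ ⟨n', x', rfl, hy, hy'⟩ hne
  refine Set.disjoint_left.2 fun z hz hz' => hne ?_
  rcases le_total n n' with h | h
  · exact F.elem_eq_of_stopping h hx hy' hz hz'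
  · exact (F.elem_eq_of_stopping h hy hx' hz' hz).symm

theorem stoppingCells_countable (g : Ω → ℝ) (l : ℝ) : (F.stoppingCells g l).Countable :=
  (Set.countable_iUnion F.countable).mono fun _ ⟨n, x, hC, _⟩ =>
    Set.mem_iUnion.2 ⟨n, hC ▸ (F.elem_mem n x).1⟩

theorem measurableSet_of_mem_stoppingCells {g : Ω → ℝ} {l : ℝ} {C : Set Ω}
    (hC : C ∈ F.stoppingCells g l) : MeasurableSet C := by
  obtain ⟨n, x, rfl, -⟩ := hC
  exact F.meas n _ (F.elem_mem n x).1

theorem sUnion_stoppingCells {g : Ω → ℝ} (hg : Integrable g μ) (hg₀ : 0 ≤ g) {l : ℝ}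
    (hl : 0 < l) : ⋃₀ F.stoppingCells g l = {x | ENNReal.ofReal l < F.maximal g x} := by
  ext x
  simp only [F.lt_maximal_iff g hl.le]
  constructor
  · rintro ⟨_, ⟨n, x₀, rfl, hx₀, -⟩, hx⟩
    exact ⟨n, by rwa [F.elem_eq_elem_of_mem le_rfl hx]⟩
  · intro hex
    obtain ⟨m, hm⟩ := F.exists_setAverage_elem_lt hg hg₀ hl
    obtain ⟨n, hn, hleast⟩ := Int.exists_least_of_bdd
      ⟨m + 1, fun k hk => not_lt.1 fun hkm => (hm k (by omega) x).not_gt hk⟩ hex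
    exact ⟨F.elem n x, ⟨n, x, rfl, hn, fun k hk => not_lt.1 fun h => (hleast k h).not_gt hk⟩,
      (F.elem_mem n x).2⟩

theorem ofReal_mul_measure_le_of_mem_stoppingCells {g : Ω → ℝ} (hg : Integrable g μ)
    (hg₀ : 0 ≤ g) {l : ℝ} (hl : 0 ≤ l) {C : Set Ω} (hC : C ∈ F.stoppingCells g l) :
    ENNReal.ofReal l * μ C ≤ ∫⁻ x in C, ENNReal.ofReal (g x) ∂μ := by
  obtain ⟨n, x, rfl, hx, -⟩ := hC
  have hcell := (F.elem_mem n x).1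
  exact ofReal_mul_measure_le_setLIntegral_of_lt_setAverage (F.pos n _ hcell).ne'
    (F.finite n _ hcell).ne hg.integrableOn hg₀ hl hx

theorem satisfiesMaximalIneq_maximal {g : Ω → ℝ} (hg : Integrable g μ) (hg₀ : 0 ≤ g) :
    SatisfiesMaximalIneq μ (F.maximal g) fun x => ENNReal.ofReal (g x) := by
  intro l hl
  rw [← F.sUnion_stoppingCells hg hg₀ hl]
  exact mul_measure_sUnion_le_setLIntegral (F.stoppingCells_countable g l)
    (F.stoppingCells_pairwiseDisjoint g l) (fun _ => F.measurableSet_of_mem_stoppingCells)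
    fun _ => F.ofReal_mul_measure_le_of_mem_stoppingCells hg hg₀ hl.le

end FiltrationOfPartitions

theorem stmt12_general {Ω : Type} [MeasurableSpace Ω] (μ : Measure Ω)
    (N₀ : ℝ) (F : FiltrationOfPartitions Ω μ N₀)
    (f : Ω → ℝ) (hf : Integrable f μ) (p : ℝ) (hp : 1 < p) :
    (∫⁻ x, F.maximal (fun y => |f y|) x ^ p ∂μ) ^ (1 / p) ≤
      ENNReal.ofReal (p / (p - 1)) * eLpNorm f (ENNReal.ofReal p) μ := by
  have hmax : SatisfiesMaximalIneq μ (F.maximal fun y => |f y|) fun x => ‖f x‖ₑ := by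
    simpa only [Real.enorm_eq_ofReal_abs] using
      F.satisfiesMaximalIneq_maximal hf.abs fun _ => abs_nonneg _
  rw [eLpNorm_eq_lintegral_rpow_enorm_toReal (by simpa using hp.trans' one_pos)
    ENNReal.ofReal_ne_top, ENNReal.toReal_ofReal (by linarith)]
  exact hmax.rpow_lintegral_rpow_le (F.measurable_maximal _) hf.1.enorm hf.2.ne hp

theorem stmt12 {Ω : Type} [MeasurableSpace Ω] (μ : Measure Ω) [SigmaFinite μ]
    (N₀ : ℝ) (hN₀ : 1 ≤ N₀) (F : FiltrationOfPartitions Ω μ N₀)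
    (f : Ω → ℝ) (hf : Integrable f μ) (p : ℝ) (hp : 1 < p) :
    (∫⁻ x, F.maximal (fun y => |f y|) x ^ p ∂μ) ^ (1 / p) ≤
      ENNReal.ofReal (p / (p - 1)) * eLpNorm f (ENNReal.ofReal p) μ :=
  stmt12_general μ N₀ F f hf p hp
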